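/- arXiv:1002.3021 — 14 statements merged into one kernel-verified Lean document; each statement's English description precedes it below -/
import Mathlib

section
/- Let U be a set, 𝒴 ⊆ 𝒫(U) a collection of subsets closed under finite intersections, and f : 𝒴 → 𝒫(U) a function satisfying (μ⊆). Then f satisfies (μPR) if and only if f satisfies (μPR'); moreover the implication from (μPR') to (μPR) holds without the closure and (μ⊆) assumptions. -/
/-- With `𝒴` closed under finite intersections and `(μ⊆)`, `(μPR)` and `(μPR')`
are equivalent; moreover `(μPR') → (μPR)` holds without these assumptions. -/
theorem stmt_1 {U : Type*} (𝒴 : Set (Set U)) (f : Set U → Set U) :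
    ((∀ X ∈ 𝒴, ∀ Y ∈ 𝒴, X ∩ Y ∈ 𝒴) → (∀ X ∈ 𝒴, f X ⊆ X) →
      ((∀ X ∈ 𝒴, ∀ Y ∈ 𝒴, X ⊆ Y → f Y ∩ X ⊆ f X) ↔
       (∀ X ∈ 𝒴, ∀ Y ∈ 𝒴, X ∩ Y ∈ 𝒴 → f X ∩ Y ⊆ f (X ∩ Y)))) ∧
    ((∀ X ∈ 𝒴, ∀ Y ∈ 𝒴, X ∩ Y ∈ 𝒴 → f X ∩ Y ⊆ f (X ∩ Y)) →
      (∀ X ∈ 𝒴, ∀ Y ∈ 𝒴, X ⊆ Y → f Y ∩ X ⊆ f X)) := by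
  have h2 : (∀ X ∈ 𝒴, ∀ Y ∈ 𝒴, X ∩ Y ∈ 𝒴 → f X ∩ Y ⊆ f (X ∩ Y)) →
      (∀ X ∈ 𝒴, ∀ Y ∈ 𝒴, X ⊆ Y → f Y ∩ X ⊆ f X) := by
    intro hPR' X hX Y hY hXY
    have hYX : Y ∩ X = X := by
      ext u; exact ⟨fun h => h.2, fun h => ⟨hXY h, h⟩⟩
    have := hPR' Y hY X hX (hYX.symm ▸ hX)
    rwa [hYX] at this
  refine ⟨fun _ hsub => ⟨fun hPR X hX Y hY hXYmem => ?_, h2⟩, h2⟩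
  intro u ⟨hu1, hu2⟩
  exact hPR (X ∩ Y) hXYmem X hX Set.inter_subset_left ⟨hu1, hsub X hX hu1, hu2⟩
end

section
/- Let U be a set, 𝒴 ⊆ 𝒫(U) a collection of subsets closed under finite unions, and f : 𝒴 → 𝒫(U) a function satisfying (μ⊆) and (μPR). Then f satisfies (μOR): for all X, Y ∈ 𝒴, f(X ∪ Y) ⊆ f(X) ∪ f(Y). -/
/-- `(μ⊆)` and `(μPR)` imply `(μOR)` when `𝒴` is closed under finite unions. -/
theorem stmt_2 {U : Type*} (𝒴 : Set (Set U)) (f : Set U → Set U)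
    (hcup : ∀ X ∈ 𝒴, ∀ Y ∈ 𝒴, X ∪ Y ∈ 𝒴)
    (hsub : ∀ X ∈ 𝒴, f X ⊆ X)
    (hPR : ∀ X ∈ 𝒴, ∀ Y ∈ 𝒴, X ⊆ Y → f Y ∩ X ⊆ f X) :
    ∀ X ∈ 𝒴, ∀ Y ∈ 𝒴, f (X ∪ Y) ⊆ f X ∪ f Y := by
  intro X hX Y hY x hx
  have hXY := hcup X hX Y hY
  rcases hsub _ hXY hx with h | h
  · exact Or.inl (hPR X hX (X ∪ Y) hXY Set.subset_union_left ⟨hx, h⟩)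
  · exact Or.inr (hPR Y hY (X ∪ Y) hXY Set.subset_union_right ⟨hx, h⟩)
end

section
/- Let U be a set, 𝒴 ⊆ 𝒫(U) closed under finite intersections, and f : 𝒴 → 𝒫(U) a function satisfying (μ⊆) and (μCM). Then f satisfies (μResM): for all X ∈ 𝒴 and all A, B ⊆ U with X ∩ A ∈ 𝒴, if f(X) ⊆ A ∩ B then f(X ∩ A) ⊆ B. -/
/-- `(μ⊆)` and `(μCM)` imply `(μResM)` when `𝒴` is closed under finite intersections. -/
theorem stmt_4 {U : Type*} (𝒴 : Set (Set U)) (f : Set U → Set U)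
    (hcap : ∀ X ∈ 𝒴, ∀ Y ∈ 𝒴, X ∩ Y ∈ 𝒴)
    (hsub : ∀ X ∈ 𝒴, f X ⊆ X)
    (hCM : ∀ X ∈ 𝒴, ∀ Y ∈ 𝒴, f X ⊆ Y → Y ⊆ X → f Y ⊆ f X) :
    ∀ X ∈ 𝒴, ∀ A B : Set U, X ∩ A ∈ 𝒴 → f X ⊆ A ∩ B → f (X ∩ A) ⊆ B := by
  intro X hX A B hXA hfX
  have h1 : f X ⊆ X ∩ A := fun x hx => ⟨hsub X hX hx, (hfX hx).1⟩
  have h2 : f (X ∩ A) ⊆ f X := hCM X hX (X ∩ A) hXA h1 Set.inter_subset_left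
  exact fun x hx => (hfX (h2 hx)).2
end

section
/- Let U be a set, 𝒴 ⊆ 𝒫(U) closed under finite intersections, and f : 𝒴 → 𝒫(U) a function satisfying (μ⊆) and (μCUM). Then f satisfies (μ⊆⊇): for all X, Y ∈ 𝒴, if f(X) ⊆ Y and f(Y) ⊆ X then f(X) = f(Y). -/
/-- `(μ⊆)` and `(μCUM)` imply `(μ⊆⊇)` when `𝒴` is closed under finite intersections. -/
theorem stmt_7 {U : Type*} (𝒴 : Set (Set U)) (f : Set U → Set U)
    (hcap : ∀ X ∈ 𝒴, ∀ Y ∈ 𝒴, X ∩ Y ∈ 𝒴)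
    (hsub : ∀ X ∈ 𝒴, f X ⊆ X)
    (hCUM : ∀ X ∈ 𝒴, ∀ Y ∈ 𝒴, f X ⊆ Y → Y ⊆ X → f Y = f X) :
    ∀ X ∈ 𝒴, ∀ Y ∈ 𝒴, f X ⊆ Y → f Y ⊆ X → f X = f Y := by
  intro X hX Y hY hXY hYX
  have hZ := hcap X hX Y hY
  have h1 : f (X ∩ Y) = f X :=
    hCUM X hX (X ∩ Y) hZ (Set.subset_inter (hsub X hX) hXY) Set.inter_subset_left
  have h2 : f (X ∩ Y) = f Y := by
    have : Y ∩ X ∈ 𝒴 := hcap Y hY X hX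
    rw [Set.inter_comm]
    exact hCUM Y hY (Y ∩ X) this (Set.subset_inter (hsub Y hY) hYX) Set.inter_subset_left
  rw [← h1, h2]
end

section
/- Let U be a set, 𝒴 ⊆ 𝒫(U), and f : 𝒴 → 𝒫(U). (i) If 𝒴 is closed under finite intersections and f satisfies (μ⊆) and (μ=), then f satisfies (μ='). (ii) Conversely, if f satisfies (μ='), then f satisfies (μ=). -/
/-- (i) If `𝒴` is closed under finite intersections and `f` satisfies `(μ⊆)` and `(μ=)`,
then `f` satisfies `(μ=')`. (ii) Conversely, `(μ=')` implies `(μ=)`. -/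
theorem stmt_10 {U : Type*} (𝒴 : Set (Set U)) (f : Set U → Set U) :
    (((∀ X ∈ 𝒴, ∀ Y ∈ 𝒴, X ∩ Y ∈ 𝒴) → (∀ X ∈ 𝒴, f X ⊆ X) →
      (∀ X ∈ 𝒴, ∀ Y ∈ 𝒴, X ⊆ Y → X ∩ f Y ≠ ∅ → f X = f Y ∩ X) →
      (∀ X ∈ 𝒴, ∀ Y ∈ 𝒴, Y ∩ X ∈ 𝒴 → f Y ∩ X ≠ ∅ → f (Y ∩ X) = f Y ∩ X))) ∧
    ((∀ X ∈ 𝒴, ∀ Y ∈ 𝒴, Y ∩ X ∈ 𝒴 → f Y ∩ X ≠ ∅ → f (Y ∩ X) = f Y ∩ X) →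
      (∀ X ∈ 𝒴, ∀ Y ∈ 𝒴, X ⊆ Y → X ∩ f Y ≠ ∅ → f X = f Y ∩ X)) := by
  constructor
  · intro _hclosed hsub heq X hX Y hY hYX hne
    have hsubY : Y ∩ X ⊆ Y := Set.inter_subset_left
    have hfY : f Y ⊆ Y := hsub Y hY
    have hne' : (Y ∩ X) ∩ f Y ≠ ∅ := by
      obtain ⟨a, ha⟩ := Set.nonempty_iff_ne_empty.2 hne
      exact Set.nonempty_iff_ne_empty.1 ⟨a, ⟨hfY ha.1, ha.2⟩, ha.1⟩
    have := heq (Y ∩ X) hYX Y hY hsubY hne'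
    rw [this]
    ext a
    constructor
    · rintro ⟨h1, _, h3⟩; exact ⟨h1, h3⟩
    · rintro ⟨h1, h2⟩; exact ⟨h1, hfY h1, h2⟩
  · intro heq X hX Y hY hXY hne
    have hYX : Y ∩ X = X := Set.inter_eq_right.2 hXY
    have hne' : f Y ∩ X ≠ ∅ := by rwa [Set.inter_comm] at hne
    have := heq X hX Y hY (by rw [hYX]; exact hX) hne'
    rwa [hYX] at this
end

section
/- Let U be a set, 𝒴 ⊆ 𝒫(U) closed under finite unions, and f : 𝒴 → 𝒫(U) a function satisfying (μ⊆) and (μ=). Then f satisfies (μ∪): for all X, Y ∈ 𝒴, if f(Y) ∩ (X − f(X)) ≠ ∅ then f(X ∪ Y) ∩ Y = ∅. -/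
/-- `(μ⊆)` and `(μ=)` imply `(μ∪)` when `𝒴` is closed under finite unions. -/
theorem stmt_11 {U : Type*} (𝒴 : Set (Set U)) (f : Set U → Set U)
    (hcup : ∀ X ∈ 𝒴, ∀ Y ∈ 𝒴, X ∪ Y ∈ 𝒴)
    (hsub : ∀ X ∈ 𝒴, f X ⊆ X)
    (hEq : ∀ X ∈ 𝒴, ∀ Y ∈ 𝒴, X ⊆ Y → X ∩ f Y ≠ ∅ → f X = f Y ∩ X) :
    ∀ X ∈ 𝒴, ∀ Y ∈ 𝒴, f Y ∩ (X \ f X) ≠ ∅ → f (X ∪ Y) ∩ Y = ∅ := by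
  intro X hX Y hY hne
  by_contra h
  obtain ⟨a, haY, haX, hafX⟩ : ∃ a, a ∈ f Y ∧ a ∈ X ∧ a ∉ f X := by
    rcases Set.nonempty_iff_ne_empty.2 hne with ⟨a, ha⟩
    exact ⟨a, ha.1, ha.2.1, ha.2.2⟩
  have hXY : X ∪ Y ∈ 𝒴 := hcup X hX Y hY
  have hYeq : f Y = f (X ∪ Y) ∩ Y := by
    apply hEq Y hY (X ∪ Y) hXY Set.subset_union_right
    rcases Set.nonempty_iff_ne_empty.2 h with ⟨b, hb⟩
    exact Set.nonempty_iff_ne_empty.1 ⟨b, hb.2, hb.1⟩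
  have haXY : a ∈ f (X ∪ Y) := (hYeq ▸ haY).1
  have hXeq : f X = f (X ∪ Y) ∩ X := by
    apply hEq X hX (X ∪ Y) hXY Set.subset_union_left
    exact Set.nonempty_iff_ne_empty.1 ⟨a, haX, haXY⟩
  exact hafX (hXeq ▸ ⟨haXY, haX⟩)
end

section
/- Let U be a set, 𝒴 ⊆ 𝒫(U) closed under finite unions, and f : 𝒴 → 𝒫(U) a function satisfying (μ⊆), (μ∅), and (μ=). Then f satisfies (μ∥), (μ∪'), and (μCUM). -/
/-- `(μ⊆)`, `(μ∅)` and `(μ=)` imply `(μ∥)`, `(μ∪')` and `(μCUM)`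
when `𝒴` is closed under finite unions. -/
theorem stmt_12 {U : Type*} (𝒴 : Set (Set U)) (f : Set U → Set U)
    (hcup : ∀ X ∈ 𝒴, ∀ Y ∈ 𝒴, X ∪ Y ∈ 𝒴)
    (hsub : ∀ X ∈ 𝒴, f X ⊆ X)
    (hempty : ∀ X ∈ 𝒴, f X = ∅ → X = ∅)
    (hEq : ∀ X ∈ 𝒴, ∀ Y ∈ 𝒴, X ⊆ Y → X ∩ f Y ≠ ∅ → f X = f Y ∩ X) :
    (∀ X ∈ 𝒴, ∀ Y ∈ 𝒴,
        f (X ∪ Y) = f X ∨ f (X ∪ Y) = f Y ∨ f (X ∪ Y) = f X ∪ f Y) ∧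
    (∀ X ∈ 𝒴, ∀ Y ∈ 𝒴, f Y ∩ (X \ f X) ≠ ∅ → f (X ∪ Y) = f X) ∧
    (∀ X ∈ 𝒴, ∀ Y ∈ 𝒴, f X ⊆ Y → Y ⊆ X → f Y = f X) := by
  refine ⟨?_, ?_, ?_⟩
  · -- (μ∥)
    intro X hX Y hY
    have hZ : X ∪ Y ∈ 𝒴 := hcup X hX Y hY
    by_cases hfz : f (X ∪ Y) = ∅
    · left
      have hZe : X ∪ Y = ∅ := hempty _ hZ hfz
      have hXe : X = ∅ := by
        apply Set.eq_empty_of_subset_empty; rw [← hZe]; exact Set.subset_union_left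
      have : f X ⊆ (∅ : Set U) := hXe ▸ hsub X hX
      rw [hfz, Set.eq_empty_of_subset_empty this]
    · by_cases hy : Y ∩ f (X ∪ Y) = ∅
      · -- f(X∪Y) ⊆ X
        left
        have hsubX : f (X ∪ Y) ⊆ X := by
          intro a ha
          rcases hsub _ hZ ha with h | h
          · exact h
          · exact absurd (Set.eq_empty_iff_forall_notMem.mp hy a ⟨h, ha⟩) (by simp)
        have hx : X ∩ f (X ∪ Y) ≠ ∅ := by
          rw [Set.inter_eq_right.mpr hsubX]; exact hfz
        rw [hEq X hX _ hZ Set.subset_union_left hx, Set.inter_eq_left.mpr hsubX]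
      · by_cases hx : X ∩ f (X ∪ Y) = ∅
        · right; left
          have hsubY : f (X ∪ Y) ⊆ Y := by
            intro a ha
            rcases hsub _ hZ ha with h | h
            · exact absurd (Set.eq_empty_iff_forall_notMem.mp hx a ⟨h, ha⟩) (by simp)
            · exact h
          rw [hEq Y hY _ hZ Set.subset_union_right hy, Set.inter_eq_left.mpr hsubY]
        · right; right
          rw [hEq X hX _ hZ Set.subset_union_left hx,
            hEq Y hY _ hZ Set.subset_union_right hy,
            ← Set.inter_union_distrib_left,
            Set.inter_eq_left.mpr (hsub _ hZ)]
  · -- (μ∪')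
    intro X hX Y hY h
    obtain ⟨a, haY, haX, hanfX⟩ : ∃ a, a ∈ f Y ∧ a ∈ X ∧ a ∉ f X := by
      rcases Set.nonempty_iff_ne_empty.mpr h with ⟨a, h1, h2, h3⟩
      exact ⟨a, h1, h2, h3⟩
    have hZ : X ∪ Y ∈ 𝒴 := hcup X hX Y hY
    have hfz : f (X ∪ Y) ≠ ∅ := by
      intro he
      have : Y ⊆ (∅ : Set U) := by
        rw [← hempty _ hZ he]; exact Set.subset_union_right
      exact this (hsub Y hY haY)
    have hy : Y ∩ f (X ∪ Y) = ∅ := by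
      by_contra hy
      have hfY := hEq Y hY _ hZ Set.subset_union_right hy
      have haZ : a ∈ f (X ∪ Y) := (hfY ▸ haY).1
      have hx : X ∩ f (X ∪ Y) ≠ ∅ := by
        apply Set.nonempty_iff_ne_empty.mp; exact ⟨a, haX, haZ⟩
      have := hEq X hX _ hZ Set.subset_union_left hx
      exact hanfX (this ▸ ⟨haZ, haX⟩)
    have hsubX : f (X ∪ Y) ⊆ X := by
      intro b hb
      rcases hsub _ hZ hb with h' | h'
      · exact h'
      · exact absurd (Set.eq_empty_iff_forall_notMem.mp hy b ⟨h', hb⟩) (by simp)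
    have hx : X ∩ f (X ∪ Y) ≠ ∅ := by
      rw [Set.inter_eq_right.mpr hsubX]; exact hfz
    rw [hEq X hX _ hZ Set.subset_union_left hx, Set.inter_eq_left.mpr hsubX]
  · -- (μCUM)
    intro X hX Y hY h1 h2
    by_cases hfx : f X = ∅
    · have hYe : Y = ∅ := Set.eq_empty_of_subset_empty (hempty X hX hfx ▸ h2)
      rw [hfx]
      exact Set.eq_empty_of_subset_empty (hYe ▸ hsub Y hY)
    · have hne : Y ∩ f X ≠ ∅ := by
        rw [Set.inter_eq_right.mpr h1]; exact hfx
      rw [hEq Y hY X hX h2 hne, Set.inter_eq_left.mpr h1]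
end

section
/- Let ≺ be an irreflexive binary relation on a set X. The following are equivalent: (1) there exist a set Ω, an irreflexive and total binary relation ≺' on Ω (total meaning: for all a ≠ b in Ω, a ≺' b or b ≺' a), and a function f : X → Ω such that for all x, y ∈ X, x ≺ y if and only if f(x) ≺' f(y); (2) for all x, y, z ∈ X, if x ⊥ y (i.e., neither x ≺ y nor y ≺ x), then z ≺ x implies z ≺ y, and x ≺ z implies y ≺ z. -/
/-- An irreflexive relation `≺` on `X` is embeddable into an irreflexive total
relation via some function `f : X → Ω` iff it satisfies the rankedness condition. -/
theorem stmt_13 {X : Type u} (r : X → X → Prop) (hirr : ∀ x, ¬ r x x) :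
    (∃ (Ω : Type u) (r' : Ω → Ω → Prop) (f : X → Ω),
        (∀ a, ¬ r' a a) ∧ (∀ a b : Ω, a ≠ b → r' a b ∨ r' b a) ∧
        (∀ x y : X, r x y ↔ r' (f x) (f y))) ↔
    (∀ x y z : X, (¬ r x y ∧ ¬ r y x) → (r z x → r z y) ∧ (r x z → r y z)) := by
  constructor
  · rintro ⟨Ω, r', f, hirr', htot, hiff⟩ x y z ⟨hxy, hyx⟩
    have hfeq : f x = f y := by
      by_contra hne
      rcases htot _ _ hne with h | h
      · exact hxy ((hiff x y).mpr h)
      · exact hyx ((hiff y x).mpr h)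
    constructor
    · intro h
      exact (hiff z y).mpr (hfeq ▸ (hiff z x).mp h)
    · intro h
      exact (hiff y z).mpr (hfeq ▸ (hiff x z).mp h)
  · intro h
    have hsymm : ∀ x y, (¬ r x y ∧ ¬ r y x) → (¬ r y x ∧ ¬ r x y) :=
      fun x y ⟨a, b⟩ => ⟨b, a⟩
    let s : Setoid X :=
      ⟨fun x y => ¬ r x y ∧ ¬ r y x,
       fun x => ⟨hirr x, hirr x⟩,
       fun hab => ⟨hab.2, hab.1⟩,
       fun {a b c} hab hbc => by
         constructor
         · intro hac
           exact hbc.1 ((h a b c hab).2 hac)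
         · intro hca
           exact hbc.2 ((h a b c hab).1 hca)⟩
    refine ⟨Quotient s, Quotient.lift₂ (fun x y => r x y) ?_, Quotient.mk s, ?_, ?_, ?_⟩
    · intro a b a' b' hab hbb
      have h1 : r a b ↔ r a' b := ⟨fun hh => (h a a' b hab).2 hh, fun hh => (h a' a b (s.symm hab)).2 hh⟩
      have h2 : r a' b ↔ r a' b' := ⟨fun hh => (h b b' a' hbb).1 hh, fun hh => (h b' b a' (s.symm hbb)).1 hh⟩
      simp only [eq_iff_iff]
      exact h1.trans h2
    · intro a
      induction a using Quotient.ind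
      exact hirr _
    · intro a b hne
      induction a using Quotient.ind
      induction b using Quotient.ind
      rename_i x y
      by_contra hc
      push_neg at hc
      exact hne (Quotient.sound ⟨hc.1, hc.2⟩)
    · intro x y
      rfl
end

section
/- Let ≺ be a ranked binary relation on a set X that is free of cycles (in particular irreflexive). Then ≺ is transitive. -/
/-- A ranked, cycle-free relation is transitive. -/
theorem stmt_14 {X : Type*} (r : X → X → Prop)
    (hranked : ∀ x y z : X, (¬ r x y ∧ ¬ r y x) → (r z x → r z y) ∧ (r x z → r y z))
    (hacyc : ∀ x : X, ¬ Relation.TransGen r x x) :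
    Transitive r := by
  intro x y z hxy hyz
  by_contra hxz
  have hzx : ¬ r z x := fun h => hacyc x
    ((Relation.TransGen.single hxy).tail hyz |>.tail h)
  have hzy : r z y := (hranked x z y ⟨hxz, hzx⟩).2 hxy
  exact hacyc y ((Relation.TransGen.single hyz).tail hzy)
end

section
/- Let ≺ be a ranked, cycle-free binary relation on a set U, and for X ⊆ U let μ(X) := {x ∈ X : there is no x' ∈ X with x' ≺ x}. Then μ satisfies, for all subsets X, Y ⊆ U: (μ⊆): μ(X) ⊆ X; (μPR): X ⊆ Y implies μ(Y) ∩ X ⊆ μ(X); (μ=): X ⊆ Y and X ∩ μ(Y) ≠ ∅ imply μ(X) = μ(Y) ∩ X; (μ='): μ(Y) ∩ X ≠ ∅ implies μ(Y ∩ X) = μ(Y) ∩ X; (μ∥): μ(X ∪ Y) equals μ(X), or μ(Y), or μ(X) ∪ μ(Y); (μ∪): μ(Y) ∩ (X − μ(X)) ≠ ∅ implies μ(X ∪ Y) ∩ Y = ∅; (μ∪'): μ(Y) ∩ (X − μ(X)) ≠ ∅ implies μ(X ∪ Y) = μ(X); (μ∈): a ∈ X − μ(X) implies there is b ∈ X with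 a ∉ μ({a, b}); (μRatM): X ⊆ Y and X ∩ μ(Y) ≠ ∅ imply μ(X) ⊆ μ(Y) ∩ X. -/
/-- The set of `≺`-minimal elements of `X`. -/
def minSet {U : Type*} (r : U → U → Prop) (X : Set U) : Set U :=
  {x ∈ X | ¬ ∃ y ∈ X, r y x}

lemma minSet_mem_iff {U : Type*} (r : U → U → Prop) (X : Set U) (x : U) :
    x ∈ minSet r X ↔ x ∈ X ∧ ¬ ∃ y ∈ X, r y x := Iff.rfl

/-- In a ranked, cycle-free structure, the minimal-element choice function `μ`
satisfies `(μ⊆)`, `(μPR)`, `(μ=)`, `(μ=')`, `(μ∥)`, `(μ∪)`, `(μ∪')`, `(μ∈)`, `(μRatM)`. -/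
theorem stmt_15 {U : Type*} (r : U → U → Prop)
    (hranked : ∀ x y z : U, (¬ r x y ∧ ¬ r y x) → (r z x → r z y) ∧ (r x z → r y z))
    (hacyc : ∀ x : U, ¬ Relation.TransGen r x x) :
    (∀ X : Set U, minSet r X ⊆ X) ∧
    (∀ X Y : Set U, X ⊆ Y → minSet r Y ∩ X ⊆ minSet r X) ∧
    (∀ X Y : Set U, X ⊆ Y → X ∩ minSet r Y ≠ ∅ → minSet r X = minSet r Y ∩ X) ∧
    (∀ X Y : Set U, minSet r Y ∩ X ≠ ∅ → minSet r (Y ∩ X) = minSet r Y ∩ X) ∧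
    (∀ X Y : Set U, minSet r (X ∪ Y) = minSet r X ∨ minSet r (X ∪ Y) = minSet r Y ∨
        minSet r (X ∪ Y) = minSet r X ∪ minSet r Y) ∧
    (∀ X Y : Set U, minSet r Y ∩ (X \ minSet r X) ≠ ∅ → minSet r (X ∪ Y) ∩ Y = ∅) ∧
    (∀ X Y : Set U, minSet r Y ∩ (X \ minSet r X) ≠ ∅ → minSet r (X ∪ Y) = minSet r X) ∧
    (∀ (X : Set U) (a : U), a ∈ X \ minSet r X → ∃ b ∈ X, a ∉ minSet r {a, b}) ∧
    (∀ X Y : Set U, X ⊆ Y → X ∩ minSet r Y ≠ ∅ → minSet r X ⊆ minSet r Y ∩ X) := by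
  -- transitivity of r
  have htr : ∀ x y z : U, r x y → r y z → r x z := by
    intro x y z hxy hyz
    by_cases hxz : r x z
    · exact hxz
    by_cases hzx : r z x
    · exact absurd ((Relation.TransGen.single hzx).trans
        ((Relation.TransGen.single hxy).trans (Relation.TransGen.single hyz)))
        (hacyc z)
    · have := (hranked x z y ⟨hxz, hzx⟩).2 hxy
      exact absurd ((Relation.TransGen.single hyz).trans (Relation.TransGen.single this))
        (hacyc y)
  -- basic clauses
  have hsub : ∀ X : Set U, minSet r X ⊆ X := fun X x hx => hx.1
  have hPR : ∀ X Y : Set U, X ⊆ Y → minSet r Y ∩ X ⊆ minSet r X := by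
    intro X Y hXY x hx
    exact ⟨hx.2, fun ⟨y, hyX, hr⟩ => hx.1.2 ⟨y, hXY hyX, hr⟩⟩
  have hempty : ∀ (S T : Set U), S ∩ T = ∅ → ∀ z, z ∈ S → z ∉ T :=
    fun S T h z hzS hzT => Set.eq_empty_iff_forall_notMem.mp h z ⟨hzS, hzT⟩
  -- (μ=)
  have hEq : ∀ X Y : Set U, X ⊆ Y → X ∩ minSet r Y ≠ ∅ → minSet r X = minSet r Y ∩ X := by
    intro X Y hXY hne
    obtain ⟨m, hmX, hmY⟩ := Set.nonempty_iff_ne_empty.mpr hne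
    apply Set.Subset.antisymm
    · intro x hx
      refine ⟨⟨hXY hx.1, ?_⟩, hx.1⟩
      rintro ⟨y, hyY, hyx⟩
      -- m ⊥ x
      have h1 : ¬ r m x := fun h => hx.2 ⟨m, hmX, h⟩
      have h2 : ¬ r x m := fun h => hmY.2 ⟨x, hXY hx.1, h⟩
      have := (hranked x m y ⟨h2, h1⟩).1 hyx
      exact hmY.2 ⟨y, hyY, this⟩
    · exact hPR X Y hXY
  -- (μ=')
  have hEq' : ∀ X Y : Set U, minSet r Y ∩ X ≠ ∅ → minSet r (Y ∩ X) = minSet r Y ∩ X := by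
    intro X Y hne
    obtain ⟨m, hmY, hmX⟩ := Set.nonempty_iff_ne_empty.mpr hne
    have hsubYX : Y ∩ X ⊆ Y := Set.inter_subset_left
    have hne' : (Y ∩ X) ∩ minSet r Y ≠ ∅ := by
      apply Set.nonempty_iff_ne_empty.mp
      exact ⟨m, ⟨hmY.1, hmX⟩, hmY⟩
    rw [hEq (Y ∩ X) Y hsubYX hne']
    ext x
    constructor
    · rintro ⟨hxm, hxY, hxX⟩; exact ⟨hxm, hxX⟩
    · rintro ⟨hxm, hxX⟩; exact ⟨hxm, hxm.1, hxX⟩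
  -- (μ∪)
  have hCup : ∀ X Y : Set U, minSet r Y ∩ (X \ minSet r X) ≠ ∅ →
      minSet r (X ∪ Y) ∩ Y = ∅ := by
    intro X Y hne
    obtain ⟨m, hmY, hmX, hmnX⟩ := Set.nonempty_iff_ne_empty.mpr hne
    have ⟨a, haX, har⟩ : ∃ a ∈ X, r a m := by
      by_contra h
      exact hmnX ⟨hmX, fun ⟨a, haX, har⟩ => h ⟨a, haX, har⟩⟩
    ext y
    simp only [Set.mem_inter_iff, Set.mem_empty_iff_false, iff_false, not_and]
    rintro hy hyY
    have h1 : ¬ r m y := fun h => hy.2 ⟨m, Or.inr hmY.1, h⟩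
    have h2 : ¬ r y m := fun h => hmY.2 ⟨y, hyY, h⟩
    have := (hranked m y a ⟨h1, h2⟩).1 har
    exact hy.2 ⟨a, Or.inl haX, this⟩
  -- (μ∪')
  have hCup' : ∀ X Y : Set U, minSet r Y ∩ (X \ minSet r X) ≠ ∅ →
      minSet r (X ∪ Y) = minSet r X := by
    intro X Y hne
    obtain ⟨m, hmY, hmX, hmnX⟩ := Set.nonempty_iff_ne_empty.mpr hne
    have ⟨a, haX, har⟩ : ∃ a ∈ X, r a m := by
      by_contra h
      exact hmnX ⟨hmX, fun ⟨a, haX, har⟩ => h ⟨a, haX, har⟩⟩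
    apply Set.Subset.antisymm
    · intro z hz
      have hzX : z ∈ X := by
        rcases hz.1 with h | h
        · exact h
        · exact absurd h (hempty _ _ (hCup X Y hne) z hz)
      exact hPR X (X ∪ Y) Set.subset_union_left ⟨hz, hzX⟩
    · intro x hx
      refine ⟨Or.inl hx.1, ?_⟩
      rintro ⟨w, hw, hwx⟩
      rcases hw with hwX | hwY
      · exact hx.2 ⟨w, hwX, hwx⟩
      · -- w ∈ Y, w ≺ x; compare x with m
        have h1 : ¬ r m x := fun h => hx.2 ⟨m, hmX, h⟩
        by_cases h2 : r x m
        · exact hmY.2 ⟨w, hwY, htr w x m hwx h2⟩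
        · have := (hranked x m w ⟨h2, h1⟩).1 hwx
          exact hmY.2 ⟨w, hwY, this⟩
  -- (μ∥)
  have hPar : ∀ X Y : Set U, minSet r (X ∪ Y) = minSet r X ∨ minSet r (X ∪ Y) = minSet r Y ∨
      minSet r (X ∪ Y) = minSet r X ∪ minSet r Y := by
    intro X Y
    have keyX : (minSet r (X ∪ Y) ∩ X).Nonempty → minSet r X = minSet r (X ∪ Y) ∩ X := by
      intro ⟨z, hz1, hz2⟩
      exact hEq X (X ∪ Y) Set.subset_union_left
        (Set.nonempty_iff_ne_empty.mp ⟨z, hz2, hz1⟩)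
    have keyY : (minSet r (X ∪ Y) ∩ Y).Nonempty → minSet r Y = minSet r (X ∪ Y) ∩ Y := by
      intro ⟨z, hz1, hz2⟩
      exact hEq Y (X ∪ Y) Set.subset_union_right
        (Set.nonempty_iff_ne_empty.mp ⟨z, hz2, hz1⟩)
    rcases Set.eq_empty_or_nonempty (minSet r (X ∪ Y) ∩ X) with hX | hX
    · rcases Set.eq_empty_or_nonempty (minSet r (X ∪ Y) ∩ Y) with hY | hY
      · -- μ(X∪Y) = ∅
        have hμ : minSet r (X ∪ Y) = ∅ := by
          ext z
          simp only [Set.mem_empty_iff_false, iff_false]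
          intro hz
          rcases hz.1 with h | h
          · exact hempty _ _ hX z hz h
          · exact hempty _ _ hY z hz h
        rcases Set.eq_empty_or_nonempty (minSet r X) with hmx | ⟨a, ha⟩
        · exact Or.inl (hμ.trans hmx.symm)
        rcases Set.eq_empty_or_nonempty (minSet r Y) with hmy | ⟨b, hb⟩
        · exact Or.inr (Or.inl (hμ.trans hmy.symm))
        exfalso
        have haU : a ∉ minSet r (X ∪ Y) := fun h => (hμ ▸ h : a ∈ (∅ : Set U))
        have hbU : b ∉ minSet r (X ∪ Y) := fun h => (hμ ▸ h : b ∈ (∅ : Set U))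
        have ⟨c, hcY, hca⟩ : ∃ c ∈ Y, r c a := by
          by_contra h
          push_neg at h
          exact haU ⟨Or.inl ha.1, by
            rintro ⟨w, hw, hwa⟩
            rcases hw with h' | h'
            · exact ha.2 ⟨w, h', hwa⟩
            · exact h w h' hwa⟩
        have ⟨d, hdX, hdb⟩ : ∃ d ∈ X, r d b := by
          by_contra h
          push_neg at h
          exact hbU ⟨Or.inr hb.1, by
            rintro ⟨w, hw, hwb⟩
            rcases hw with h' | h'
            · exact h w h' hwb
            · exact hb.2 ⟨w, h', hwb⟩⟩
        by_cases hab : r a b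
        · exact hb.2 ⟨c, hcY, htr c a b hca hab⟩
        by_cases hba : r b a
        · exact ha.2 ⟨d, hdX, htr d b a hdb hba⟩
        · have := (hranked a b c ⟨hab, hba⟩).1 hca
          exact hb.2 ⟨c, hcY, this⟩
      · -- μ(X∪Y)∩X = ∅, ∩Y nonempty : μ(X∪Y) ⊆ Y so equals μY
        right; left
        rw [keyY hY]
        apply Set.Subset.antisymm
        · intro z hz
          refine ⟨hz, ?_⟩
          rcases hz.1 with h | h
          · exact absurd h (hempty _ _ hX z hz)
          · exact h
        · exact Set.inter_subset_left
    · rcases Set.eq_empty_or_nonempty (minSet r (X ∪ Y) ∩ Y) with hY | hY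
      · left
        rw [keyX hX]
        apply Set.Subset.antisymm
        · intro z hz
          refine ⟨hz, ?_⟩
          rcases hz.1 with h | h
          · exact h
          · exact absurd h (hempty _ _ hY z hz)
        · exact Set.inter_subset_left
      · right; right
        rw [keyX hX, keyY hY, ← Set.inter_union_distrib_left]
        exact (Set.inter_eq_left.mpr (hsub (X ∪ Y))).symm
  refine ⟨hsub, hPR, hEq, hEq', hPar, hCup, hCup', ?_, fun X Y h1 h2 => (hEq X Y h1 h2).subset⟩
  -- (μ∈)
  intro X a ⟨haX, hanX⟩
  have ⟨b, hbX, hba⟩ : ∃ b ∈ X, r b a := by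
    by_contra h
    push_neg at h
    exact hanX ⟨haX, fun ⟨y, hyX, hya⟩ => h y hyX hya⟩
  exact ⟨b, hbX, fun h => h.2 ⟨b, Or.inr rfl, hba⟩⟩
end

section
/- Given a set X and a binary relation R on X, there exists a total preorder S on X (a total, reflexive, transitive relation) that extends R such that for all x, y ∈ X, if x S y and y S x then x R* y, where R* is the reflexive-transitive closure of R. -/
/-- Any binary relation `R` on `X` extends to a total preorder `S` such that
mutually `S`-related elements are related by the reflexive-transitive closure of `R`. -/
theorem stmt_16 {X : Type*} (R : X → X → Prop) :
    ∃ S : X → X → Prop,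
      (∀ x, S x x) ∧ Transitive S ∧ (∀ x y : X, S x y ∨ S y x) ∧
      (∀ x y : X, R x y → S x y) ∧
      (∀ x y : X, S x y → S y x → Relation.ReflTransGen R x y) := by
  classical
  let s : Setoid X :=
    ⟨fun x y => Relation.ReflTransGen R x y ∧ Relation.ReflTransGen R y x,
     ⟨fun _ => ⟨.refl, .refl⟩, fun h => ⟨h.2, h.1⟩,
      fun h₁ h₂ => ⟨h₁.1.trans h₂.1, h₂.2.trans h₁.2⟩⟩⟩
  let Q := Quotient s
  let le : Q → Q → Prop := Quotient.lift₂ (fun x y => Relation.ReflTransGen R x y)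
    (by
      intro a b c d hac hbd
      simp only [eq_iff_iff]
      exact ⟨fun h => (hac.2.trans h).trans hbd.1, fun h => (hac.1.trans h).trans hbd.2⟩)
  letI : PartialOrder Q :=
    { le := le
      le_refl := fun q => Quotient.inductionOn q fun x => Relation.ReflTransGen.refl
      le_trans := fun a b c => Quotient.inductionOn₃ a b c fun x y z h₁ h₂ => Relation.ReflTransGen.trans h₁ h₂
      le_antisymm := fun a b => Quotient.inductionOn₂ a b fun x y h₁ h₂ =>
        Quotient.sound ⟨h₁, h₂⟩ }
  let f : X → LinearExtension Q := fun x => toLinearExtension ⟦x⟧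
  refine ⟨fun x y => f x ≤ f y, fun x => le_refl _, fun a b c h₁ h₂ => h₁.trans h₂,
    fun x y => le_total _ _, fun x y h => toLinearExtension.monotone ?_, fun x y h₁ h₂ => ?_⟩
  · exact Relation.ReflTransGen.single h
  · have : f x = f y := le_antisymm h₁ h₂
    have hq : (⟦x⟧ : Q) = ⟦y⟧ := this
    exact (Quotient.exact hq).1
end

section
/- Let Z be a set, I an index set, 𝒳 ⊆ Z × I, and ≺ a binary relation on 𝒳 that is ranked and free of cycles. For X ⊆ Z define μ_𝒵(X) := {x ∈ X : there exists ⟨x, i⟩ ∈ 𝒳 such that there is no ⟨x', i'⟩ ∈ 𝒳 with x' ∈ X and ⟨x', i'⟩ ≺ ⟨x, i⟩}. Let 𝒴 ⊆ 𝒫(Z) and f : 𝒴 → 𝒫(Z) with f(X) = μ_𝒵(X) for all X ∈ 𝒴. Then there exist an index set I', a set 𝒳' ⊆ Z × I', and a relation ≺' on 𝒳' that is ranked and free of cycles, such that 𝒳' is 1-∞ over Z (for every z ∈ Z, the set of copies {i' : ⟨z, i'⟩ ∈ 𝒳'} has cardinality exactly 1 or is infinite), and f(X) = μ_𝒵'(X)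 for all X ∈ 𝒴, where μ_𝒵' is defined from ⟨𝒳', ≺'⟩ in the same way. -/
universe u v

/-- Minimal elements of `X ⊆ Z` in a preferential structure with copies
`⟨𝒳, prec⟩`, `𝒳 ⊆ Z × I`. -/
def muCopies {Z : Type u} {I : Type v} (𝒳 : Set (Z × I))
    (prec : Z × I → Z × I → Prop) (X : Set Z) : Set Z :=
  {x ∈ X | ∃ i : I, (x, i) ∈ 𝒳 ∧ ¬ ∃ q ∈ 𝒳, q.1 ∈ X ∧ prec q (x, i)}

/-- new index type -/
abbrev Idx17 (I : Type v) : Type (max u v) :=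
  (ULift.{u} (I × ℕ)) ⊕ (ULift.{max u v} ℕ)

def memX17 {Z : Type u} {I : Type v} (𝒳 : Set (Z × I)) :
    Z × Idx17.{u, v} I → Prop
  | (z, Sum.inl i) => (z, i.down.1) ∈ 𝒳
  | (_, Sum.inr _) => True

def XSet17 {Z : Type u} {I : Type v} (𝒳 : Set (Z × I)) :
    Set (Z × Idx17.{u, v} I) := {p | memX17 𝒳 p}

def prec17 {Z : Type u} {I : Type v} (prec : Z × I → Z × I → Prop) :
    Z × Idx17.{u, v} I → Z × Idx17.{u, v} I → Prop
  | (z, Sum.inl i), (z', Sum.inl j) => prec (z, i.down.1) (z', j.down.1)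
  | (_, Sum.inl _), (_, Sum.inr _) => True
  | (_, Sum.inr _), (_, Sum.inl _) => False
  | (_, Sum.inr n), (_, Sum.inr m) => m.down < n.down

section
variable {Z : Type u} {I : Type v} (𝒳 : Set (Z × I)) (prec : Z × I → Z × I → Prop)

lemma transA :
    ∀ u v : Z × Idx17.{u, v} I,
      Relation.TransGen (fun p q => p ∈ XSet17 𝒳 ∧ q ∈ XSet17 𝒳 ∧ prec17 prec p q) u v →
      ∀ j, v.2 = Sum.inl j →
        ∃ i, u.2 = Sum.inl i ∧
          Relation.TransGen (fun p q => p ∈ 𝒳 ∧ q ∈ 𝒳 ∧ prec p q)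
            (u.1, i.down.1) (v.1, j.down.1) := by
  intro u v h
  induction h with
  | single h =>
    intro j hj
    obtain ⟨hu, hv, hp⟩ := h
    rename_i b
    obtain ⟨zu, iu⟩ := u; obtain ⟨zb, ib⟩ := b
    cases iu with
    | inl i =>
      cases ib with
      | inl jb =>
        cases hj
        exact ⟨i, rfl, Relation.TransGen.single ⟨hu, hv, hp⟩⟩
      | inr _ => simp at hj
    | inr n =>
      cases ib with
      | inl jb => exact absurd hp (by simp [prec17])
      | inr _ => simp at hj
  | tail h1 h2 ih =>
    intro j hj
    rename_i b c
    obtain ⟨hb, hc, hp⟩ := h2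
    obtain ⟨zb, ib⟩ := b; obtain ⟨zc, ic⟩ := c
    cases ib with
    | inl i =>
      cases ic with
      | inl jc =>
        cases hj
        obtain ⟨i0, hi0, htg⟩ := ih i rfl
        exact ⟨i0, hi0, htg.tail ⟨hb, hc, hp⟩⟩
      | inr _ => simp at hj
    | inr n =>
      cases ic with
      | inl jc => exact absurd hp (by simp [prec17])
      | inr _ => simp at hj

lemma transB :
    ∀ u v : Z × Idx17.{u, v} I,
      Relation.TransGen (fun p q => p ∈ XSet17 𝒳 ∧ q ∈ XSet17 𝒳 ∧ prec17 prec p q) u v →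
      ∀ m, v.2 = Sum.inr m →
        (∃ i, u.2 = Sum.inl i) ∨ ∃ n, u.2 = Sum.inr n ∧ m.down < n.down := by
  intro u v h
  induction h with
  | single h =>
    intro m hm
    obtain ⟨hu, hv, hp⟩ := h
    rename_i b
    obtain ⟨zu, iu⟩ := u; obtain ⟨zb, ib⟩ := b
    cases iu with
    | inl i => exact Or.inl ⟨i, rfl⟩
    | inr n =>
      cases ib with
      | inl jb => simp at hm
      | inr mb =>
        cases hm
        exact Or.inr ⟨n, rfl, hp⟩
  | tail h1 h2 ih =>
    intro m hm
    rename_i b c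
    obtain ⟨hb, hc, hp⟩ := h2
    obtain ⟨zb, ib⟩ := b; obtain ⟨zc, ic⟩ := c
    cases ib with
    | inl i =>
      obtain ⟨i0, hi0, _⟩ := transA 𝒳 prec _ _ h1 i rfl
      exact Or.inl ⟨i0, hi0⟩
    | inr n =>
      cases ic with
      | inl jc => simp at hm
      | inr mc =>
        cases hm
        rcases ih n rfl with h | ⟨k, hk, hlt⟩
        · exact Or.inl h
        · exact Or.inr ⟨k, hk, lt_trans hp hlt⟩

lemma mu17 (X : Set Z) :
    muCopies (XSet17 𝒳) (prec17 prec) X = muCopies 𝒳 prec X := by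
  ext x
  constructor
  · rintro ⟨hx, i', hmem, hmin⟩
    refine ⟨hx, ?_⟩
    cases i' with
    | inl i =>
      refine ⟨i.down.1, hmem, ?_⟩
      rintro ⟨q, hq, hqX, hqp⟩
      exact hmin ⟨(q.1, Sum.inl ⟨(q.2, 0)⟩), hq, hqX, hqp⟩
    | inr n =>
      exfalso
      exact hmin ⟨(x, Sum.inr ⟨n.down + 1⟩), trivial, hx,
        by simp [prec17]⟩
  · rintro ⟨hx, i, hmem, hmin⟩
    refine ⟨hx, Sum.inl ⟨(i, 0)⟩, hmem, ?_⟩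
    rintro ⟨q, hq, hqX, hqp⟩
    obtain ⟨zq, iq⟩ := q
    cases iq with
    | inl j => exact hmin ⟨(zq, j.down.1), hq, hqX, hqp⟩
    | inr n => exact hqp

end

/-- Any ranked, cycle-free preferential structure with copies representing `f` on `𝒴`
can be replaced by a ranked, cycle-free structure that is `1-∞` over `Z`
(every element has exactly one or infinitely many copies) and still represents `f`. -/
theorem stmt_17 {Z : Type u} {I : Type v} (𝒳 : Set (Z × I))
    (prec : Z × I → Z × I → Prop)
    (hranked : ∀ u ∈ 𝒳, ∀ v ∈ 𝒳, ∀ w ∈ 𝒳, (¬ prec u v ∧ ¬ prec v u) →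
        (prec w u → prec w v) ∧ (prec u w → prec v w))
    (hacyc : ∀ u : Z × I,
        ¬ Relation.TransGen (fun p q => p ∈ 𝒳 ∧ q ∈ 𝒳 ∧ prec p q) u u)
    (𝒴 : Set (Set Z)) (f : Set Z → Set Z)
    (hrep : ∀ X ∈ 𝒴, f X = muCopies 𝒳 prec X) :
    ∃ (I' : Type (max u v)) (𝒳' : Set (Z × I')) (prec' : Z × I' → Z × I' → Prop),
      (∀ u ∈ 𝒳', ∀ v ∈ 𝒳', ∀ w ∈ 𝒳', (¬ prec' u v ∧ ¬ prec' v u) →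
          (prec' w u → prec' w v) ∧ (prec' u w → prec' v w)) ∧
      (∀ u : Z × I',
          ¬ Relation.TransGen (fun p q => p ∈ 𝒳' ∧ q ∈ 𝒳' ∧ prec' p q) u u) ∧
      (∀ z : Z, (∃! i' : I', (z, i') ∈ 𝒳') ∨ {i' : I' | (z, i') ∈ 𝒳'}.Infinite) ∧
      (∀ X ∈ 𝒴, f X = muCopies 𝒳' prec' X) := by
  refine ⟨Idx17.{u, v} I, XSet17 𝒳, prec17 prec, ?_, ?_, ?_, ?_⟩
  · -- ranked
    rintro ⟨zu, iu⟩ hu ⟨zv, iv⟩ hv ⟨zw, iw⟩ hw ⟨h1, h2⟩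
    cases iu with
    | inl a =>
      cases iv with
      | inl b =>
        cases iw with
        | inl c =>
          exact hranked (zu, a.down.1) hu (zv, b.down.1) hv (zw, c.down.1) hw ⟨h1, h2⟩
        | inr k => exact ⟨fun h => h.elim, fun _ => trivial⟩
      | inr m => exact absurd trivial h1
    | inr n =>
      cases iv with
      | inl b => exact absurd trivial h2
      | inr m =>
        have hnm : n.down = m.down := le_antisymm (not_lt.1 h1) (not_lt.1 h2)
        cases iw with
        | inl c => exact ⟨fun _ => trivial, fun h => h.elim⟩
        | inr k =>
          constructor
          · intro h; show m.down < k.down; rw [← hnm]; exact h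
          · intro h; show k.down < m.down; rw [← hnm]; exact h
  · -- acyclic
    rintro ⟨z, i'⟩ h
    cases i' with
    | inl i =>
      obtain ⟨i0, hi0, htg⟩ := transA 𝒳 prec _ _ h i rfl
      obtain rfl : i0 = i := (by injection hi0 : i = i0).symm
      exact hacyc _ htg
    | inr n =>
      rcases transB 𝒳 prec _ _ h n rfl with ⟨i, hi⟩ | ⟨k, hk, hlt⟩
      · simp at hi
      · obtain rfl : k = n := (by injection hk : n = k).symm
        exact lt_irrefl _ hlt
  · -- 1-∞
    intro z
    right
    apply Set.infinite_of_injective_forall_mem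
      (f := fun n : ℕ => (Sum.inr ⟨n⟩ : Idx17.{u, v} I))
      (fun a b hab => by simpa using hab) (fun n => show memX17 𝒳 (z, Sum.inr ⟨n⟩) from trivial)
  · intro X hX
    rw [hrep X hX, mu17]
end

section
/- Let U be a set and 𝒴 ⊆ 𝒫(U) be closed under finite unions, and let f : 𝒴 → 𝒫(U) satisfy (μ⊆), (μ∅), and (μ=). Then there exists a ranked, irreflexive binary relation < on U such that: (i) f(X) = μ_<(X) for all X ∈ 𝒴, where μ_<(X) := {x ∈ X : ¬∃ x' ∈ X, x' < x}; (ii) μ_<(X) ≠ ∅ for every nonempty X ∈ 𝒴; and (iii) the structure is 𝒴-smooth: for every X ∈ 𝒴 and every x ∈ X, either x ∈ μ_<(X) or there is x' ∈ μ_<(X) with x' < x. -/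
/-- Representation: if `𝒴` is closed under finite unions and `f` satisfies `(μ⊆)`,
`(μ∅)` and `(μ=)`, then `f` is represented by a ranked, irreflexive relation `<`
on `U`, with nonempty minima on nonempty sets, and the structure is `𝒴`-smooth. -/
theorem stmt_18 {U : Type*} (𝒴 : Set (Set U)) (f : Set U → Set U)
    (hcup : ∀ X ∈ 𝒴, ∀ Y ∈ 𝒴, X ∪ Y ∈ 𝒴)
    (hsub : ∀ X ∈ 𝒴, f X ⊆ X)
    (hempty : ∀ X ∈ 𝒴, f X = ∅ → X = ∅)
    (hEq : ∀ X ∈ 𝒴, ∀ Y ∈ 𝒴, X ⊆ Y → X ∩ f Y ≠ ∅ → f X = f Y ∩ X) :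
    ∃ r : U → U → Prop,
      (∀ x, ¬ r x x) ∧
      (∀ x y z : U, (¬ r x y ∧ ¬ r y x) → (r z x → r z y) ∧ (r x z → r y z)) ∧
      (∀ X ∈ 𝒴, f X = minSet r X) ∧
      (∀ X ∈ 𝒴, X ≠ ∅ → minSet r X ≠ ∅) ∧
      (∀ X ∈ 𝒴, ∀ x ∈ X, x ∈ minSet r X ∨ ∃ x' ∈ minSet r X, r x' x) := by
  classical
  set le : U → U → Prop := fun x y => ∃ X ∈ 𝒴, x ∈ f X ∧ y ∈ X with hle
  set A : Set U := {x | ∃ X ∈ 𝒴, x ∈ f X} with hA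
  -- basic lemmas
  have lem1 : ∀ X ∈ 𝒴, ∀ Y ∈ 𝒴, (X ∩ f (X ∪ Y)).Nonempty → f X = f (X ∪ Y) ∩ X := by
    intro X hX Y hY hne
    exact hEq X hX (X ∪ Y) (hcup X hX Y hY) Set.subset_union_left
      (Set.nonempty_iff_ne_empty.mp hne)
  have lem1' : ∀ X ∈ 𝒴, ∀ Y ∈ 𝒴, (Y ∩ f (X ∪ Y)).Nonempty → f Y = f (X ∪ Y) ∩ Y := by
    intro X hX Y hY hne
    exact hEq Y hY (X ∪ Y) (hcup X hX Y hY) Set.subset_union_right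
      (Set.nonempty_iff_ne_empty.mp hne)
  have lem2 : ∀ X ∈ 𝒴, ∀ Y ∈ 𝒴, X.Nonempty →
      (X ∩ f (X ∪ Y)).Nonempty ∨ (Y ∩ f (X ∪ Y)).Nonempty := by
    intro X hX Y hY hXne
    have hXY : X ∪ Y ∈ 𝒴 := hcup X hX Y hY
    have hne : f (X ∪ Y) ≠ ∅ := by
      intro h
      have := hempty _ hXY h
      rcases hXne with ⟨x, hx⟩
      exact absurd (this ▸ (Set.mem_union_left Y hx)) (by simp)
    rcases Set.nonempty_iff_ne_empty.mpr hne with ⟨w, hw⟩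
    rcases hsub _ hXY hw with h | h
    · exact Or.inl ⟨w, h, hw⟩
    · exact Or.inr ⟨w, h, hw⟩
  have le_refl : ∀ x ∈ A, le x x := by
    rintro x ⟨X, hX, hx⟩
    exact ⟨X, hX, hx, hsub X hX hx⟩
  have le_trans : ∀ x y z, le x y → le y z → le x z := by
    rintro x y z ⟨X, hX, hxf, hyX⟩ ⟨Y, hY, hyf, hzY⟩
    have hXY : X ∪ Y ∈ 𝒴 := hcup X hX Y hY
    rcases lem2 X hX Y hY ⟨x, hsub X hX hxf⟩ with h | h
    · have hfX := lem1 X hX Y hY h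
      exact ⟨X ∪ Y, hXY, (hfX ▸ hxf).1, Or.inr hzY⟩
    · have hfY := lem1' X hX Y hY h
      have hyU : y ∈ f (X ∪ Y) := (hfY ▸ hyf).1
      have hfX := lem1 X hX Y hY ⟨y, hyX, hyU⟩
      exact ⟨X ∪ Y, hXY, (hfX ▸ hxf).1, Or.inr hzY⟩
  have le_total : ∀ x ∈ A, ∀ y ∈ A, le x y ∨ le y x := by
    rintro x ⟨X, hX, hx⟩ y ⟨Y, hY, hy⟩
    rcases lem2 X hX Y hY ⟨x, hsub X hX hx⟩ with h | h
    · have hfX := lem1 X hX Y hY h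
      exact Or.inl ⟨X ∪ Y, hcup X hX Y hY, (hfX ▸ hx).1, Or.inr (hsub Y hY hy)⟩
    · have hfY := lem1' X hX Y hY h
      exact Or.inr ⟨X ∪ Y, hcup X hX Y hY, (hfY ▸ hy).1, Or.inl (hsub X hX hx)⟩
  -- key: if x ∈ X \ f X and y ∈ f X then ¬ le x y
  have hkey : ∀ X ∈ 𝒴, ∀ x ∈ X, x ∉ f X → ∀ y ∈ f X, ¬ le x y := by
    rintro X hX x hxX hxf y hyf ⟨Z, hZ, hxZ, hyZ⟩
    rcases lem2 X hX Z hZ ⟨x, hxX⟩ with h | h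
    · have hfX := lem1 X hX Z hZ h
      have hyU : y ∈ f (X ∪ Z) := (hfX ▸ hyf).1
      have hfZ := lem1' X hX Z hZ ⟨y, hyZ, hyU⟩
      have hxU : x ∈ f (X ∪ Z) := (hfZ ▸ hxZ).1
      exact hxf ((hfX ▸ (⟨hxU, hxX⟩ : x ∈ f (X ∪ Z) ∩ X)))
    · have hfZ := lem1' X hX Z hZ h
      have hxU : x ∈ f (X ∪ Z) := (hfZ ▸ hxZ).1
      have hfX := lem1 X hX Z hZ ⟨x, hxX, hxU⟩
      exact hxf ((hfX ▸ (⟨hxU, hxX⟩ : x ∈ f (X ∪ Z) ∩ X)))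
  -- the preorder s and strict part r
  set s : U → U → Prop := fun x y => y ∉ A ∨ (x ∈ A ∧ le x y) with hs
  set r : U → U → Prop := fun x y => s x y ∧ ¬ s y x with hr
  have s_refl : ∀ x, s x x := by
    intro x
    by_cases h : x ∈ A
    · exact Or.inr ⟨h, le_refl x h⟩
    · exact Or.inl h
  have s_trans : ∀ x y z, s x y → s y z → s x z := by
    rintro x y z hxy (hz | ⟨hyA, hyz⟩)
    · exact Or.inl hz
    · rcases hxy with hy | ⟨hxA, hxy⟩
      · exact absurd hyA hy
      · exact Or.inr ⟨hxA, le_trans x y z hxy hyz⟩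
  have s_total : ∀ x y, s x y ∨ s y x := by
    intro x y
    by_cases hy : y ∈ A
    · by_cases hx : x ∈ A
      · rcases le_total x hx y hy with h | h
        · exact Or.inl (Or.inr ⟨hx, h⟩)
        · exact Or.inr (Or.inr ⟨hy, h⟩)
      · exact Or.inr (Or.inl hx)
    · exact Or.inl (Or.inl hy)
  refine ⟨r, ?_, ?_, ?_, ?_, ?_⟩
  · intro x ⟨h1, h2⟩; exact h2 (s_refl x)
  · rintro x y z ⟨hxy, hyx⟩
    have hsxy : s x y := by
      rcases s_total x y with h | h
      · exact h
      · by_contra h'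
        exact hyx ⟨h, h'⟩
    have hsyx : s y x := by
      rcases s_total y x with h | h
      · exact h
      · by_contra h'
        exact hxy ⟨h, h'⟩
    constructor
    · rintro ⟨h1, h2⟩
      exact ⟨s_trans z x y h1 hsxy, fun h => h2 (s_trans x y z hsxy h)⟩
    · rintro ⟨h1, h2⟩
      exact ⟨s_trans y x z hsyx h1, fun h => h2 (s_trans z y x h hsyx)⟩
  · -- representation
    intro X hX
    ext x
    constructor
    · intro hxf
      refine ⟨hsub X hX hxf, ?_⟩
      rintro ⟨y, hyX, hsyx, hnsxy⟩
      have hxA : x ∈ A := ⟨X, hX, hxf⟩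
      have hxy : le x y := ⟨X, hX, hxf, hyX⟩
      exact hnsxy (Or.inr ⟨hxA, hxy⟩)
    · rintro ⟨hxX, hmin⟩
      by_contra hxf
      have hne : f X ≠ ∅ := fun h => by
        have := hempty X hX h
        exact absurd (this ▸ hxX) (by simp)
      rcases Set.nonempty_iff_ne_empty.mpr hne with ⟨y, hyf⟩
      refine hmin ⟨y, hsub X hX hyf, ?_, ?_⟩
      · exact Or.inr ⟨⟨X, hX, hyf⟩, ⟨X, hX, hyf, hxX⟩⟩
      · rintro (hy | ⟨hxA, hxy⟩)
        · exact hy ⟨X, hX, hyf⟩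
        · exact hkey X hX x hxX hxf y hyf hxy
  · -- nonempty minima
    intro X hX hXne
    have hne : f X ≠ ∅ := fun h => hXne (hempty X hX h)
    -- use representation
    have : f X = minSet r X := by
      ext x
      constructor
      · intro hxf
        refine ⟨hsub X hX hxf, ?_⟩
        rintro ⟨y, hyX, hsyx, hnsxy⟩
        exact hnsxy (Or.inr ⟨⟨X, hX, hxf⟩, ⟨X, hX, hxf, hyX⟩⟩)
      · rintro ⟨hxX, hmin⟩
        by_contra hxf
        have hne' : f X ≠ ∅ := fun h => by
          have := hempty X hX h
          exact absurd (this ▸ hxX) (by simp)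
        rcases Set.nonempty_iff_ne_empty.mpr hne' with ⟨y, hyf⟩
        refine hmin ⟨y, hsub X hX hyf, ?_, ?_⟩
        · exact Or.inr ⟨⟨X, hX, hyf⟩, ⟨X, hX, hyf, hxX⟩⟩
        · rintro (hy | ⟨hxA, hxy⟩)
          · exact hy ⟨X, hX, hyf⟩
          · exact hkey X hX x hxX hxf y hyf hxy
    rw [← this]; exact hne
  · -- smoothness
    intro X hX x hxX
    by_cases hxf : x ∈ f X
    · left
      refine ⟨hxX, ?_⟩
      rintro ⟨y, hyX, hsyx, hnsxy⟩
      exact hnsxy (Or.inr ⟨⟨X, hX, hxf⟩, ⟨X, hX, hxf, hyX⟩⟩)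
    · right
      have hne : f X ≠ ∅ := fun h => by
        have := hempty X hX h
        exact absurd (this ▸ hxX) (by simp)
      rcases Set.nonempty_iff_ne_empty.mpr hne with ⟨y, hyf⟩
      refine ⟨y, ⟨hsub X hX hyf, ?_⟩, ?_, ?_⟩
      · rintro ⟨z, hzX, hszy, hnsyz⟩
        exact hnsyz (Or.inr ⟨⟨X, hX, hyf⟩, ⟨X, hX, hyf, hzX⟩⟩)
      · exact Or.inr ⟨⟨X, hX, hyf⟩, ⟨X, hX, hyf, hxX⟩⟩
      · rintro (hy | ⟨hxA, hxy⟩)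
        · exact hy ⟨X, hX, hyf⟩
        · exact hkey X hX x hxX hxf y hyf hxy
end

section
/- Let W be a finite set and ob : 𝒫(W) → 𝒫(𝒫(W)) a function such that for every X ⊆ W: ob(X) ≠ ∅; every A ∈ ob(X) satisfies A ⊆ X; ob(X) is closed under binary intersections (condition (5-c)); and condition (5-d) holds: if Y ∈ ob(X), Y ⊆ X ⊆ Z, then (Z − X) ∪ Y ∈ ob(Z). Define μ(X) := ⋂ ob(X) (the intersection of all members of ob(X)). Then: (i) μ(X) ∈ ob(X) and is the smallest element of ob(X) under inclusion; (ii) μ satisfies (μ⊆): μ(X) ⊆ X; and (iii) μ satisfies (μPR): for all X ⊆ Z ⊆ W, μ(Z) ∩ X ⊆ μ(X). -/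
/-!
Since `W` is finite, the intersection-closed family `ob X` contains its own intersection, which is
then its least element. For `(μPR)`, every `A ∈ ob X` gives `(Z \ X) ∪ A ∈ ob Z` by (5-d); a point
of `μ Z ∩ X` lies in this set but not in `Z \ X`, hence in `A`.
-/

open Set

lemma sInter_inter_subset_sInter_of_union_mem {α : Type*} {𝒜 ℬ : Set (Set α)} {C X : Set α}
    (hCX : Disjoint C X) (h : ∀ A ∈ 𝒜, C ∪ A ∈ ℬ) : ⋂₀ ℬ ∩ X ⊆ ⋂₀ 𝒜 := by
  rintro w ⟨hwℬ, hwX⟩ A hA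
  rcases hwℬ _ (h A hA) with hwC | hwA
  · exact absurd hwX (hCX.notMem_of_mem_left hwC)
  · exact hwA

/-- For finite `W` and `ob` with nonempty values `ob X ⊆ 𝒫(X)` closed under binary
intersections and satisfying (5-d), the function `μ(X) := ⋂ ob(X)` is the smallest
element of `ob X`, and satisfies `(μ⊆)` and `(μPR)`. -/
theorem stmt_19 {W : Type*} [Finite W] (ob : Set W → Set (Set W))
    (hne : ∀ X : Set W, ob X ≠ ∅)
    (hsub : ∀ X : Set W, ∀ A ∈ ob X, A ⊆ X)
    (hinter : ∀ X : Set W, ∀ A ∈ ob X, ∀ B ∈ ob X, A ∩ B ∈ ob X)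
    (h5d : ∀ X Z : Set W, ∀ Y ∈ ob X, Y ⊆ X → X ⊆ Z → (Z \ X) ∪ Y ∈ ob Z) :
    (∀ X : Set W, ⋂₀ ob X ∈ ob X ∧ ∀ A ∈ ob X, ⋂₀ ob X ⊆ A) ∧
    (∀ X : Set W, ⋂₀ ob X ⊆ X) ∧
    (∀ X Z : Set W, X ⊆ Z → ⋂₀ ob Z ∩ X ⊆ ⋂₀ ob X) := by
  have sInter_mem (X : Set W) : ⋂₀ ob X ∈ ob X :=
    InfClosed.sInf_mem_of_nonempty (fun A hA B hB ↦ hinter X A hA B hB) (toFinite _)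
      (nonempty_iff_ne_empty.2 (hne X)) subset_rfl
  refine ⟨fun X ↦ ⟨sInter_mem X, fun _ ↦ sInter_subset_of_mem⟩,
    fun X ↦ hsub X _ (sInter_mem X), fun X Z hXZ ↦ ?_⟩
  exact sInter_inter_subset_sInter_of_union_mem disjoint_sdiff_left
    fun A hA ↦ h5d X Z A hA (hsub X A hA) hXZ
end
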